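/- The map λ ↦ w_λ is a bijection from the set of all Young diagrams inside the k×(n−k) rectangle onto W^J, the set of minimal length coset representatives of S_n/(S_k × S_{n−k}). -/

import Mathlib

open scoped Classical

set_option maxHeartbeats 1000000
set_option synthInstance.maxHeartbeats 1000000

noncomputable section

/-- The field ℚ(v) of rational functions. -/
abbrev F : Type := RatFunc ℚ

/-- The variable v. -/
def v : F := RatFunc.X

/-- The quantum integer [r] = (v^r - v^{-r})/(v - v^{-1}). -/
def qint (r : ℕ) : F := (v ^ r - v⁻¹ ^ r) / (v - v⁻¹)

/-- Sequences of n signs (`true` = `+`) with exactly k pluses. -/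
abbrev Stt (n k : ℕ) := {ε : Fin n → Bool // (Finset.univ.filter fun t => ε t = true).card = k}

/-- The adjacent transposition s_m ∈ S_n (1-based: swaps positions m and m+1). -/
def sperm (n m : ℕ) : Equiv.Perm (Fin n) :=
  if h : 1 ≤ m ∧ m < n then Equiv.swap ⟨m - 1, by omega⟩ ⟨m, h.2⟩ else 1

/-- Action of w ∈ S_n on sequences: (w·ε)_{w(t)} = ε_t. -/
def actE {n : ℕ} (w : Equiv.Perm (Fin n)) (ε : Fin n → Bool) : Fin n → Bool :=
  fun u => ε (w⁻¹ u)

lemma card_actE {n k : ℕ} (w : Equiv.Perm (Fin n)) (ε : Fin n → Bool)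
    (h : (Finset.univ.filter fun t => ε t = true).card = k) :
    (Finset.univ.filter fun t => actE w ε t = true).card = k := by
  rw [← h]
  apply Finset.card_bij (fun t _ => w⁻¹ t)
  · intro a ha
    simp only [Finset.mem_filter, Finset.mem_univ, true_and, actE] at ha ⊢
    exact (Finset.mem_filter.1 ha).2
  · intro a _ b _ hab
    exact (Equiv.injective _) hab
  · intro b hb
    simp only [Finset.mem_filter, Finset.mem_univ, true_and, actE] at hb ⊢
    exact ⟨w b, Finset.mem_filter.2 ⟨Finset.mem_univ _, by simpa using hb⟩, by simp⟩

/-- Action of S_n on the set E of sequences with k pluses. -/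
def actS {n k : ℕ} (w : Equiv.Perm (Fin n)) (ε : Stt n k) : Stt n k :=
  ⟨actE w ε.1, card_actE w ε.1 ε.2⟩

/-- The module M, free over ℚ(v) with basis E. -/
abbrev M (n k : ℕ) := Stt n k → F

/-- The basis vector of M corresponding to ε ∈ E. -/
def bv {n k : ℕ} (ε : Stt n k) : M n k := Pi.single ε 1

/-- The sequence 𝟏 = (+,…,+,−,…,−) (k pluses then n−k minuses). -/
def oneSeq (n k : ℕ) : Fin n → Bool := fun t => decide ((t : ℕ) < k)

lemma card_oneSeq (n k : ℕ) (h : k ≤ n) :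
    (Finset.univ.filter fun t => oneSeq n k t = true).card = k := by
  have : (Finset.univ.filter fun t => oneSeq n k t = true)
      = Finset.univ.map (Fin.castLEEmb h) := by
    ext t
    simp only [Finset.mem_filter, Finset.mem_univ, true_and, oneSeq, decide_eq_true_eq,
      Finset.mem_map]
    constructor
    · intro ht; exact ⟨⟨t, ht⟩, rfl⟩
    · rintro ⟨s, rfl⟩; exact s.2
  rw [this, Finset.card_map, Finset.card_univ, Fintype.card_fin]

/-- 𝟏 as an element of E. -/
def oneS (n k : ℕ) (h : k ≤ n) : Stt n k := ⟨oneSeq n k, card_oneSeq n k h⟩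

/-- The operator T_m on M (1 ≤ m ≤ n−1), defined on basis elements. -/
def Thk (n k : ℕ) (m : ℕ) : M n k →ₗ[F] M n k :=
  (Pi.basisFun F (Stt n k)).constr ℕ fun ε =>
    if h : 1 ≤ m ∧ m < n then
      let a := ε.1 ⟨m - 1, by omega⟩
      let b := ε.1 ⟨m, h.2⟩
      if a = true ∧ b = false then bv (actS (sperm n m) ε)
      else if a = b then (-v⁻¹) • bv ε
      else bv (actS (sperm n m) ε) + (v - v⁻¹) • bv ε
    else 0

/-- A Young diagram inside the k×(n−k) rectangle, given by its row lengths
(1-based: row i has lam i boxes). -/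
def IsYoung (n k : ℕ) (lam : ℕ → ℕ) : Prop :=
  (∀ i, 1 ≤ i → lam (i + 1) ≤ lam i) ∧ lam 1 ≤ n - k ∧ (∀ i, k < i → lam i = 0)

/-- The boxes of λ, listed row by row from the bottom row to the top row,
each row from its last box to its first (so box (1,1) comes last). -/
def boxList (k : ℕ) (lam : ℕ → ℕ) : List (ℕ × ℕ) :=
  ((List.range k).reverse.map fun i' =>
    (List.range (lam (i' + 1))).reverse.map fun j' => (i' + 1, j' + 1)).flatten

/-- The word of w_λ: letter k+j−i for box (i,j). -/
def wword (k : ℕ) (lam : ℕ → ℕ) : List ℕ := (boxList k lam).map fun b => k + b.2 - b.1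

/-- The permutation w_λ = ∏_{(i,j)∈λ} s_{k+j−i} (box (1,1) rightmost). -/
def wperm (n k : ℕ) (lam : ℕ → ℕ) : Equiv.Perm (Fin n) := ((wword k lam).map (sperm n)).prod

/-- w_λ·𝟏 as an element of E. -/
def wSt (n k : ℕ) (h : k ≤ n) (lam : ℕ → ℕ) : Stt n k := actS (wperm n k lam) (oneS n k h)

/-- r is the system of shifts of λ: r_{ij} = max(r_{i,j+1}, r_{i+1,j}) + 1 on boxes of λ,
and r_{ij} = 0 off λ. -/
def IsShifts (lam : ℕ → ℕ) (r : ℕ → ℕ → ℕ) : Prop :=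
  ∀ i j, r i j = if 1 ≤ i ∧ 1 ≤ j ∧ j ≤ lam i then max (r i (j + 1)) (r (i + 1) j) + 1 else 0

/-- The operator X_λ = ∏_{(i,j)∈λ} (T_{k+j−i} − v^{r_{ij}}/[r_{ij}]), the factor of
box (1,1) applied first. -/
def Xop (n k : ℕ) (lam : ℕ → ℕ) (r : ℕ → ℕ → ℕ) : Module.End F (M n k) :=
  ((boxList k lam).map fun b =>
    (Thk n k (k + b.2 - b.1) - (v ^ r b.1 b.2 / qint (r b.1 b.2)) • (1 : Module.End F (M n k)) : Module.End F (M n k))).prod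

/-- O(v^m): rational functions with a zero of order ≥ m at v = 0. -/
def Ozero (m : ℕ) : Set F :=
  {f | ∃ p q : Polynomial ℚ, Polynomial.eval 0 q ≠ 0 ∧
        f = v ^ m * (algebraMap (Polynomial ℚ) F p / algebraMap (Polynomial ℚ) F q)}

/-- Value of a sequence at the 1-based position t. -/
def posVal {n : ℕ} (ε : Fin n → Bool) (t : ℕ) : Bool :=
  if h : 1 ≤ t ∧ t ≤ n then ε ⟨t - 1, by omega⟩ else false

/-- a(i) = k + λ_i − i + 1 for 1 ≤ i ≤ k, and a(i) = 0 for i > k. -/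
def aF (k : ℕ) (lam : ℕ → ℕ) (i : ℕ) : ℕ := if i ≤ k then k + lam i + 1 - i else 0

/-- The contribution r_t(ε) to the weight. -/
def weightT (k : ℕ) (lam : ℕ → ℕ) (r : ℕ → ℕ → ℕ) {n : ℕ} (ε : Fin n → Bool) (t : ℕ) : ℕ :=
  ∑ i ∈ Finset.Icc 1 k,
    ((if posVal ε t = false ∧ 1 ≤ lam i ∧ t = aF k lam i then r i (lam i) - 1 else 0) +
     (if posVal ε t = true ∧ aF k lam (i + 1) < t ∧ t < aF k lam i then r i (t + i - k) else 0))

/-- The weight r_λ(ε) = Σ_{t=1}^n r_t(ε). -/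
def weight (n k : ℕ) (lam : ℕ → ℕ) (r : ℕ → ℕ → ℕ) (ε : Fin n → Bool) : ℕ :=
  ∑ t ∈ Finset.Icc 1 n, weightT k lam r ε t

/-- 𝓛_λ = Σ_ε O(v^{r_λ(ε)}) ε. -/
def Lset (n k : ℕ) (lam : ℕ → ℕ) (r : ℕ → ℕ → ℕ) : Set (M n k) :=
  {m | ∀ ε : Stt n k, m ε ∈ Ozero (weight n k lam r ε.1)}

/-- The length (number of inversions) of a permutation. -/
def len {n : ℕ} (w : Equiv.Perm (Fin n)) : ℕ :=
  (Finset.univ.filter fun p : Fin n × Fin n => p.1 < p.2 ∧ w p.2 < w p.1).card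

/-- The parabolic subgroup W_J = S_k × S_{n−k}: permutations mapping {1,…,k} to itself. -/
def WJ (n k : ℕ) : Set (Equiv.Perm (Fin n)) :=
  {σ | ∀ t : Fin n, (t : ℕ) < k → ((σ t : ℕ) < k)}

/-- W^J: permutations of minimal length in their coset w·W_J. -/
def Wmin (n k : ℕ) : Set (Equiv.Perm (Fin n)) :=
  {w | ∀ σ ∈ WJ n k, len w ≤ len (w * σ)}

/-- The variable x_p (1-based position p) in ℚ(v)[x_1,…,x_n]. -/
def xv (n p : ℕ) : MvPolynomial (Fin n) F :=
  if h : 1 ≤ p ∧ p ≤ n then MvPolynomial.X ⟨p - 1, by omega⟩ else 0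

/-- Exchange of the variables x_i and x_{i+1} (1-based, 1 ≤ i ≤ n−1). -/
def swapf (n i : ℕ) (f : MvPolynomial (Fin n) F) : MvPolynomial (Fin n) F :=
  if h : 1 ≤ i ∧ i < n then
    MvPolynomial.rename (Equiv.swap ⟨i - 1, by omega⟩ ⟨i, h.2⟩) f
  else f

/-- The divided difference ∂_i f = (f − s_i f)/(x_i − x_{i+1}). -/
def ddiff (n i : ℕ) (f : MvPolynomial (Fin n) F) : MvPolynomial (Fin n) F :=
  if h : ∃ g, f - swapf n i f = (xv n i - xv n (i + 1)) * g then h.choose else 0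

/-- The operator ∇_i f = (v x_{i+1} − v⁻¹ x_i)·∂_i f. -/
def nabla (n i : ℕ) (f : MvPolynomial (Fin n) F) : MvPolynomial (Fin n) F :=
  (MvPolynomial.C v * xv n (i + 1) - MvPolynomial.C v⁻¹ * xv n i) * ddiff n i f

/-- Parenthesis matching: minuses (`false`) are openers, pluses (`true`) are closers;
each plus is matched with the most recent unmatched minus, i.e. each minus with the first
subsequent unmatched plus.  Returns the list of matched pairs (p,q) of 1-based positions
and the list of unmatched minus positions. -/
def matchAux : List Bool → ℕ → List ℕ → List (ℕ × ℕ) × List ℕ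
  | [], _, stack => ([], stack)
  | b :: rest, pos, stack =>
    if b then
      match stack with
      | [] => matchAux rest (pos + 1) []
      | p :: stack' =>
        let res := matchAux rest (pos + 1) stack'
        ((p, pos) :: res.1, res.2)
    else matchAux rest (pos + 1) (pos :: stack)

/-- d(ε) = #{(p,q) : p < q, ε_p = −, ε_q = +}. -/
def dstat {n : ℕ} (ε : Fin n → Bool) : ℕ :=
  (Finset.univ.filter fun pq : Fin n × Fin n =>
    pq.1 < pq.2 ∧ ε pq.1 = false ∧ ε pq.2 = true).card

/-- The polynomial Q_ε. -/
def Qpoly (n : ℕ) (ε : Fin n → Bool) : MvPolynomial (Fin n) F :=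
  MvPolynomial.C (v⁻¹ ^ dstat ε) *
    ((matchAux (List.ofFn ε) 1 []).1.map fun pq =>
        xv n pq.1 - MvPolynomial.C (v ^ (pq.2 + 1 - pq.1)) * xv n pq.2).prod *
    ((matchAux (List.ofFn ε) 1 []).2.map fun p => xv n p).prod

/-- The operator T_m on M′ (the parabolic module induced from T_j ↦ v). -/
def Thk' (n k : ℕ) (m : ℕ) : M n k →ₗ[F] M n k :=
  (Pi.basisFun F (Stt n k)).constr ℕ fun ε =>
    if h : 1 ≤ m ∧ m < n then
      let a := ε.1 ⟨m - 1, by omega⟩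
      let b := ε.1 ⟨m, h.2⟩
      if a = true ∧ b = false then bv (actS (sperm n m) ε)
      else if a = b then v • bv ε
      else bv (actS (sperm n m) ε) + (v - v⁻¹) • bv ε
    else 0

/-- The map Φ : M′ → ℚ(v)[x_1,…,x_n], ε ↦ v^{−d(ε)} ∏_{t : ε_t = −} x_t. -/
def Phi (n k : ℕ) : M n k →ₗ[F] MvPolynomial (Fin n) F :=
  (Pi.basisFun F (Stt n k)).constr ℕ fun ε =>
    MvPolynomial.C (v⁻¹ ^ dstat ε.1) *
      ∏ t ∈ Finset.univ.filter (fun t => ε.1 t = false), MvPolynomial.X t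

/-- The space P(k,n): polynomials homogeneous of total degree n−k, of degree ≤ 1 in each
variable. -/
def Pspace (n k : ℕ) : Set (MvPolynomial (Fin n) F) :=
  {f | f.IsHomogeneous (n - k) ∧ ∀ t : Fin n, f.degreeOf t ≤ 1}


/-!
A permutation `w` is of minimal length in `w·W_J` iff it is increasing on each of the blocks
`{1,…,k}` and `{k+1,…,n}`. Indeed, for such `w` every inversion crosses the two blocks, and the
number of crossing inversions does not change under right multiplication by `W_J`; conversely a
descent inside a block is removed by an adjacent transposition lying in `W_J`.

In the word of `w_λ`, row `i` contributes `s_{k-i+λ_i} ⋯ s_{k-i+1}`, which moves position `k-i+1`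
to `k-i+1+λ_i` and shifts the positions in between down by one. Applying the rows from the top,
each row only moves positions below the images of the rows before it, as `λ_{i+1} ≤ λ_i`; so
`w_λ(k-i+1) = k-i+1+λ_i` and `w_λ` is increasing on both blocks. A permutation increasing on the
second block is determined by its values on the first, so `λ_i = w(k-i+1) - (k-i+1)` inverts
`λ ↦ w_λ`.
-/

open Equiv Set

theorem Equiv.Perm.eq_of_eqOn_of_strictMonoOn_compl {α : Type*} [LinearOrder α] [Finite α]
    {u w : Perm α} {s : Set α} (h : EqOn u w s) (hu : StrictMonoOn u sᶜ)
    (hw : StrictMonoOn w sᶜ) : u = w := by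
  have hrange : range (sᶜ.domRestrict u) = range (sᶜ.domRestrict w) := by
    rw [range_domRestrict, range_domRestrict, Equiv.image_compl, Equiv.image_compl, h.image_eq]
  have hres := (hu.domRestrict.range_inj hw.domRestrict).1 hrange
  ext x
  by_cases hx : x ∈ s
  · rw [h hx]
  · exact congrFun hres ⟨x, hx⟩

theorem Equiv.Perm.len_mul_swap_add_one {n : ℕ} {w : Perm (Fin n)} {a b : Fin n} (hab : a ⋖ b)
    (hw : w b < w a) : len (w * swap a b) + 1 = len w := by
  have hab' : (a : ℕ) + 1 = b := by simpa using hab.coe_fin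
  have hmem : (a, b) ∈ Finset.univ.filter fun p : Fin n × Fin n => p.1 < p.2 ∧ w p.2 < w p.1 :=
    by simp [hab.lt, hw]
  rw [len, len, ← Finset.card_erase_add_one hmem]
  congr 1
  refine (Finset.card_equiv ((swap a b).prodCongr (swap a b)) fun ⟨x, y⟩ => ?_).symm
  simp only [Finset.mem_erase, Finset.mem_filter, Finset.mem_univ, true_and, prodCongr_apply,
    Prod.map, ne_eq, Prod.mk.injEq]
  simp only [Perm.mul_apply, swap_apply_self]
  by_cases hxy : w y < w x
  · simp only [hxy, and_true]
    rw [swap_apply_def, swap_apply_def]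
    split_ifs <;> subst_vars <;> omega
  · simp [hxy]

/-- The first block `{1, …, k}`, in the 0-based positions of `Fin n`. -/
def lowBlock (n k : ℕ) : Set (Fin n) := {t | (t : ℕ) < k}

lemma mem_lowBlock_compl {n k : ℕ} {t : Fin n} : t ∈ (lowBlock n k)ᶜ ↔ k ≤ (t : ℕ) := by
  simp [lowBlock]

lemma ordConnected_lowBlock (n k : ℕ) : (lowBlock n k).OrdConnected :=
  ⟨fun _ _ _ hy _ hz => lt_of_le_of_lt (Fin.le_def.1 hz.2) hy⟩

lemma ordConnected_lowBlock_compl (n k : ℕ) : (lowBlock n k)ᶜ.OrdConnected :=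
  ⟨fun _ hx _ _ _ hz =>
    mem_lowBlock_compl.2 ((mem_lowBlock_compl.1 hx).trans (Fin.le_def.1 hz.1))⟩

section Wmin

variable {n k : ℕ}

lemma lt_iff_of_mem_WJ {σ : Perm (Fin n)} (hσ : σ ∈ WJ n k) (t : Fin n) :
    (σ t : ℕ) < k ↔ (t : ℕ) < k := by
  have hbij : BijOn σ (lowBlock n k) (lowBlock n k) :=
    ((toFinite _).injOn_iff_bijOn_of_mapsTo hσ).1 σ.injective.injOn
  refine ⟨fun h => ?_, hσ t⟩
  obtain ⟨a, ha, hat⟩ := hbij.surjOn h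
  exact σ.injective hat ▸ ha

lemma swap_mem_WJ {a b : Fin n} (h : (a : ℕ) < k ↔ (b : ℕ) < k) : swap a b ∈ WJ n k := by
  intro t ht
  rw [swap_apply_def]
  split_ifs with hta htb
  · exact h.1 (hta ▸ ht)
  · exact h.2 (htb ▸ ht)
  · exact ht

def crossInversions (k : ℕ) (w : Perm (Fin n)) : Finset (Fin n × Fin n) :=
  Finset.univ.filter fun p => (p.1 : ℕ) < k ∧ k ≤ (p.2 : ℕ) ∧ w p.2 < w p.1

lemma card_crossInversions_le_len (w : Perm (Fin n)) : (crossInversions k w).card ≤ len w := by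
  refine Finset.card_le_card fun p hp => ?_
  simp only [crossInversions, Finset.mem_filter, Finset.mem_univ, true_and] at hp ⊢
  exact ⟨Fin.lt_def.2 (lt_of_lt_of_le hp.1 hp.2.1), hp.2.2⟩

lemma card_crossInversions_mul_of_mem_WJ (w : Perm (Fin n)) {σ : Perm (Fin n)}
    (hσ : σ ∈ WJ n k) : (crossInversions k (w * σ)).card = (crossInversions k w).card :=
  Finset.card_equiv (σ.prodCongr σ) fun p => by
    simp only [crossInversions, Finset.mem_filter, Finset.mem_univ, true_and, prodCongr_apply,
      Prod.map, Perm.mul_apply, lt_iff_of_mem_WJ hσ, ← not_lt]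

lemma len_eq_card_crossInversions {w : Perm (Fin n)} (hlow : StrictMonoOn w (lowBlock n k))
    (hhigh : StrictMonoOn w (lowBlock n k)ᶜ) : len w = (crossInversions k w).card := by
  unfold len crossInversions
  congr 1
  refine Finset.filter_congr fun ⟨a, b⟩ _ => ⟨fun ⟨hab, hinv⟩ => ?_, fun ⟨ha, hb, hinv⟩ => ?_⟩
  all_goals dsimp only at *
  · by_contra hcross
    have hsame : ((b : ℕ) < k ∧ (a : ℕ) < k) ∨ (k ≤ (a : ℕ) ∧ k ≤ (b : ℕ)) := by
      simp only [Fin.lt_def] at hab; omega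
    rcases hsame with ⟨hb, ha⟩ | ⟨ha, hb⟩
    · exact (hlow ha hb hab).asymm hinv
    · exact (hhigh (mem_lowBlock_compl.2 ha) (mem_lowBlock_compl.2 hb) hab).asymm hinv
  · exact ⟨Fin.lt_def.2 (lt_of_lt_of_le ha hb), hinv⟩

lemma mem_Wmin_of_strictMonoOn {w : Perm (Fin n)} (hlow : StrictMonoOn w (lowBlock n k))
    (hhigh : StrictMonoOn w (lowBlock n k)ᶜ) : w ∈ Wmin n k := fun σ hσ =>
  calc len w = (crossInversions k w).card := len_eq_card_crossInversions hlow hhigh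
    _ = (crossInversions k (w * σ)).card := (card_crossInversions_mul_of_mem_WJ w hσ).symm
    _ ≤ len (w * σ) := card_crossInversions_le_len _

lemma lt_of_covBy_of_mem_Wmin {w : Perm (Fin n)} (hw : w ∈ Wmin n k) {a b : Fin n} (hab : a ⋖ b)
    (hk : (a : ℕ) < k ↔ (b : ℕ) < k) : w a < w b := by
  by_contra! hba
  have hlt : w b < w a := hba.lt_of_ne (w.injective.ne hab.lt.ne')
  have := hw _ (swap_mem_WJ hk)
  have := Perm.len_mul_swap_add_one hab hlt
  omega

lemma strictMonoOn_of_mem_Wmin {w : Perm (Fin n)} (hw : w ∈ Wmin n k) {s : Set (Fin n)}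
    (hs : s.OrdConnected) (hblock : ∀ a ∈ s, ∀ b ∈ s, ((a : ℕ) < k ↔ (b : ℕ) < k)) :
    StrictMonoOn w s :=
  strictMonoOn_of_lt_succ hs fun _ ha has hsa =>
    lt_of_covBy_of_mem_Wmin hw (Order.covBy_succ_of_not_isMax ha) (hblock _ has _ hsa)

lemma mem_Wmin_iff {w : Perm (Fin n)} :
    w ∈ Wmin n k ↔ StrictMonoOn w (lowBlock n k) ∧ StrictMonoOn w (lowBlock n k)ᶜ :=
  ⟨fun hw => ⟨strictMonoOn_of_mem_Wmin hw (ordConnected_lowBlock n k)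
      fun _ ha _ hb => iff_of_true ha hb,
    strictMonoOn_of_mem_Wmin hw (ordConnected_lowBlock_compl n k)
      fun _ ha _ hb => iff_of_false ha hb⟩,
   fun h => mem_Wmin_of_strictMonoOn h.1 h.2⟩

end Wmin

section RowCycles

variable {n : ℕ}

lemma sperm_apply_val {m : ℕ} (hm : 1 ≤ m) (hmn : m < n) (t : Fin n) :
    (sperm n m t : ℕ) = if (t : ℕ) = m - 1 then m else if (t : ℕ) = m then m - 1 else t := by
  rw [sperm, dif_pos ⟨hm, hmn⟩, swap_apply_def]
  split_ifs <;> simp only [Fin.ext_iff] at * <;> omega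

/-- The factor `s_{a+L} ⋯ s_{a+1}` of `w_λ` contributed by a row of length `L`; with 0-based
positions it moves `a` to `a + L`. -/
def rowCycle (n a L : ℕ) : Perm (Fin n) :=
  ((List.range L).reverse.map fun j => sperm n (a + j + 1)).prod

lemma rowCycle_succ (a L : ℕ) :
    rowCycle n a (L + 1) = sperm n (a + L + 1) * rowCycle n a L := by
  simp [rowCycle, List.range_succ]

lemma rowCycle_apply_val {a L : ℕ} (h : a + L < n ∨ L = 0) (t : Fin n) :
    (rowCycle n a L t : ℕ) =
      if (t : ℕ) = a then a + L else if a < t ∧ t ≤ a + L then t - 1 else t := by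
  induction L with
  | zero =>
    rw [show rowCycle n a 0 = 1 from rfl, Perm.one_apply]
    split_ifs <;> omega
  | succ L ih =>
    rw [rowCycle_succ, Perm.mul_apply, sperm_apply_val (by omega) (by omega), ih (by omega)]
    split_ifs <;> omega

lemma rowCycle_strictMonoOn {a L : ℕ} (h : a + L < n ∨ L = 0) :
    StrictMonoOn (rowCycle n a L) {t | a < (t : ℕ)} := by
  intro x (hx : a < (x : ℕ)) y (hy : a < (y : ℕ)) hxy
  simp only [Fin.lt_def, rowCycle_apply_val h] at *
  split_ifs <;> omega

end RowCycles

lemma Equiv.Perm.mapsTo_compl_of_forall_mem_eq {α : Type*} (σ : Perm α) {s : Set α}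
    (h : ∀ x ∈ s, σ x = x) : MapsTo σ sᶜ sᶜ :=
  fun _ hx hσx => hx (σ.injective (h _ hσx) ▸ hσx)

section Young

variable {n k : ℕ} {lam : ℕ → ℕ}

lemma IsYoung.antitoneOn (hY : IsYoung n k lam) : AntitoneOn lam (Ici 1) :=
  antitoneOn_of_add_one_le ordConnected_Ici fun a _ ha _ => hY.1 a ha

lemma IsYoung.le_sub (hY : IsYoung n k lam) {i : ℕ} (hi : 1 ≤ i) : lam i ≤ n - k :=
  (hY.antitoneOn (mem_Ici.2 le_rfl) (mem_Ici.2 hi) hi).trans hY.2.1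

/-- The product of the factors of rows `1, …, m` of `w_λ`. -/
def topRowsPerm (n k : ℕ) (lam : ℕ → ℕ) (m : ℕ) : Perm (Fin n) :=
  ((List.range m).reverse.map fun i => rowCycle n (k - (i + 1)) (lam (i + 1))).prod

lemma topRowsPerm_succ (m : ℕ) :
    topRowsPerm n k lam (m + 1) =
      rowCycle n (k - (m + 1)) (lam (m + 1)) * topRowsPerm n k lam m := by
  simp [topRowsPerm, List.range_succ]

lemma wperm_eq_topRowsPerm : wperm n k lam = topRowsPerm n k lam k := by
  unfold wperm wword boxList topRowsPerm rowCycle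
  rw [List.map_flatten, List.map_flatten, List.prod_flatten]
  simp only [List.map_map]
  refine congrArg List.prod (List.map_congr_left fun i hi => ?_)
  have hik : i < k := by simpa using hi
  simp only [Function.comp_apply, List.map_map]
  refine congrArg List.prod (List.map_congr_left fun j _ => ?_)
  simp only [Function.comp_apply]
  congr 1
  omega

lemma topRowsPerm_spec (hY : IsYoung n k lam) {m : ℕ} (hm : m ≤ k) :
    (∀ t : Fin n, (t : ℕ) < k - m → topRowsPerm n k lam m t = t) ∧
    (∀ t : Fin n, k - m ≤ (t : ℕ) → (t : ℕ) < k →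
      (topRowsPerm n k lam m t : ℕ) = t + lam (k - t)) ∧
    StrictMonoOn (topRowsPerm n k lam m) (lowBlock n k)ᶜ := by
  induction m with
  | zero => exact ⟨fun t _ => rfl, fun t h1 h2 => by omega, fun _ _ _ _ h => h⟩
  | succ m ih =>
    obtain ⟨hfix, hrows, hmono⟩ := ih (by omega)
    have hrow : k - (m + 1) + lam (m + 1) < n ∨ lam (m + 1) = 0 := by
      have := hY.le_sub (Nat.le_add_left 1 m); omega
    rw [topRowsPerm_succ]
    refine ⟨fun t ht => ?_, fun t ht hk => ?_, ?_⟩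
    · rw [Perm.mul_apply, hfix t (by omega)]
      exact Fin.ext (by rw [rowCycle_apply_val hrow]; split_ifs <;> omega)
    · rw [Perm.mul_apply, rowCycle_apply_val hrow]
      rcases eq_or_lt_of_le ht with heq | hlt
      · rw [hfix t (by omega), if_pos heq.symm, ← heq, Nat.sub_sub_self hm]
      · have hlam : lam (m + 1) ≤ lam (k - t) :=
          hY.antitoneOn (mem_Ici.2 (by omega)) (mem_Ici.2 (by omega)) (by omega)
        rw [hrows t (by omega) hk]
        split_ifs <;> omega
    · refine (rowCycle_strictMonoOn hrow).comp hmono fun t ht => ?_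
      have hmaps := (topRowsPerm n k lam m).mapsTo_compl_of_forall_mem_eq
        (s := {t : Fin n | (t : ℕ) < k - m}) hfix
      have hge : ¬ (topRowsPerm n k lam m t : ℕ) < k - m :=
        hmaps (show ¬ (t : ℕ) < k - m by have := mem_lowBlock_compl.1 ht; omega)
      show k - (m + 1) < _
      omega

lemma wperm_apply_val_of_lt (hY : IsYoung n k lam) {t : Fin n} (ht : (t : ℕ) < k) :
    (wperm n k lam t : ℕ) = t + lam (k - t) := by
  rw [wperm_eq_topRowsPerm]
  exact (topRowsPerm_spec hY le_rfl).2.1 t (by omega) ht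

lemma wperm_strictMonoOn_lowBlock (hY : IsYoung n k lam) :
    StrictMonoOn (wperm n k lam) (lowBlock n k) := by
  intro x (hx : (x : ℕ) < k) y (hy : (y : ℕ) < k) hxy
  rw [Fin.lt_def] at hxy ⊢
  rw [wperm_apply_val_of_lt hY hx, wperm_apply_val_of_lt hY hy]
  have := hY.antitoneOn (mem_Ici.2 (by omega)) (mem_Ici.2 (by omega))
    (show k - y ≤ k - x by omega)
  omega

lemma wperm_strictMonoOn_lowBlock_compl (hY : IsYoung n k lam) :
    StrictMonoOn (wperm n k lam) (lowBlock n k)ᶜ := by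
  rw [wperm_eq_topRowsPerm]
  exact (topRowsPerm_spec hY le_rfl).2.2

lemma wperm_mem_Wmin (hY : IsYoung n k lam) : wperm n k lam ∈ Wmin n k :=
  mem_Wmin_of_strictMonoOn (wperm_strictMonoOn_lowBlock hY) (wperm_strictMonoOn_lowBlock_compl hY)

end Young

section Inverse

variable {n k : ℕ}

lemma IsYoung.index_bounds {lam : ℕ → ℕ} (hY : IsYoung n k lam) (h0 : lam 0 = 0) {i : ℕ}
    (hi : lam i ≠ 0) : 1 ≤ i ∧ i ≤ k ∧ k < n := by
  have hi1 : 1 ≤ i := Nat.one_le_iff_ne_zero.2 fun h => hi (h ▸ h0)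
  have hik : i ≤ k := by by_contra h; exact hi (hY.2.2 i (by omega))
  have := hY.le_sub hi1
  omega

lemma wperm_injOn : InjOn (wperm n k) {lam | IsYoung n k lam ∧ lam 0 = 0} := by
  rintro lam ⟨hY, h0⟩ lam' ⟨hY', h0'⟩ heq
  funext i
  by_cases hzero : lam i = 0 ∧ lam' i = 0
  · rw [hzero.1, hzero.2]
  obtain ⟨hi1, hik, hkn⟩ : 1 ≤ i ∧ i ≤ k ∧ k < n := by
    rcases not_and_or.1 hzero with hi | hi
    exacts [hY.index_bounds h0 hi, hY'.index_bounds h0' hi]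
  let t : Fin n := ⟨k - i, by omega⟩
  have ht : (t : ℕ) < k := show k - i < k by omega
  have hval := congrArg (fun w : Perm (Fin n) => (w t : ℕ)) heq
  simp only [wperm_apply_val_of_lt hY ht, wperm_apply_val_of_lt hY' ht,
    show k - (t : ℕ) = i from Nat.sub_sub_self hik] at hval
  omega

lemma le_apply_of_strictMonoOn_lowBlock {w : Perm (Fin n)} (hw : StrictMonoOn w (lowBlock n k))
    {t : Fin n} (ht : (t : ℕ) < k) : (t : ℕ) ≤ w t := by
  have hcard := Finset.card_le_card_of_injOn w (s := Finset.Iic t) (t := Finset.Iic (w t))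
    (fun x hx => Finset.mem_Iic.2 <|
      hw.monotoneOn (lt_of_le_of_lt (Fin.le_def.1 (Finset.mem_Iic.1 hx)) ht) ht
        (Finset.mem_Iic.1 hx))
    w.injective.injOn
  simpa using hcard

/-- The inverse of `λ ↦ w_λ` on `W^J`. -/
def youngOf (n k : ℕ) (w : Perm (Fin n)) (i : ℕ) : ℕ :=
  if h : 1 ≤ i ∧ i ≤ k ∧ k - i < n then (w ⟨k - i, h.2.2⟩ : ℕ) - (k - i) else 0

lemma youngOf_sub (w : Perm (Fin n)) {t : Fin n} (ht : (t : ℕ) < k) :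
    youngOf n k w (k - t) = w t - t := by
  rw [youngOf, dif_pos (by omega)]
  simp only [Nat.sub_sub_self ht.le]

lemma youngOf_mem {w : Perm (Fin n)} (hw : w ∈ Wmin n k) :
    IsYoung n k (youngOf n k w) ∧ youngOf n k w 0 = 0 := by
  have hlow := (mem_Wmin_iff.1 hw).1
  refine ⟨⟨fun i hi => ?_, ?_, fun i hi => dif_neg (by omega)⟩, dif_neg (by omega)⟩
  · unfold youngOf
    split_ifs with h1 h2
    · have hs : k - (i + 1) < k := by omega
      have hstep : (w ⟨k - (i + 1), h1.2.2⟩ : ℕ) < w ⟨k - i, h2.2.2⟩ :=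
        hlow hs (show k - i < k by omega) (Fin.lt_def.2 (show k - (i + 1) < k - i by omega))
      have hge : k - (i + 1) ≤ (w ⟨k - (i + 1), h1.2.2⟩ : ℕ) :=
        le_apply_of_strictMonoOn_lowBlock (t := ⟨k - (i + 1), h1.2.2⟩) hlow hs
      omega
    · have := (w ⟨k - (i + 1), h1.2.2⟩).isLt
      omega
    all_goals exact Nat.zero_le _
  · unfold youngOf
    split_ifs with h
    · have := (w ⟨k - 1, h.2.2⟩).isLt
      omega
    · exact Nat.zero_le _

lemma wperm_youngOf {w : Perm (Fin n)} (hw : w ∈ Wmin n k) :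
    wperm n k (youngOf n k w) = w := by
  obtain ⟨hlow, hhigh⟩ := mem_Wmin_iff.1 hw
  have hY := (youngOf_mem hw).1
  refine Perm.eq_of_eqOn_of_strictMonoOn_compl (fun t (ht : (t : ℕ) < k) => Fin.ext ?_)
    (wperm_strictMonoOn_lowBlock_compl hY) hhigh
  rw [wperm_apply_val_of_lt hY ht, youngOf_sub w ht]
  have := le_apply_of_strictMonoOn_lowBlock hlow ht
  omega

end Inverse

theorem young_bij_minimal_reps_general (n k : ℕ) :
    Set.BijOn (fun lam => wperm n k lam)
      {lam : ℕ → ℕ | IsYoung n k lam ∧ lam 0 = 0} (Wmin n k) :=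
  ⟨fun _ hlam => wperm_mem_Wmin hlam.1, wperm_injOn,
    fun _ hw => ⟨youngOf n k _, youngOf_mem hw, wperm_youngOf hw⟩⟩

/-- λ ↦ w_λ is a bijection from Young diagrams inside the k×(n−k)
rectangle (normalized by λ₀ = 0) onto the set W^J of minimal length coset
representatives of S_n/(S_k × S_(n−k)). -/
theorem young_bij_minimal_reps (n k : ℕ) (hk : 0 < k) (hkn : k < n) :
    Set.BijOn (fun lam => wperm n k lam)
      {lam : ℕ → ℕ | IsYoung n k lam ∧ lam 0 = 0} (Wmin n k) :=
  young_bij_minimal_reps_general n k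

end
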